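/- arXiv:2301.04953 — 2 statements merged into one kernel-verified Lean document; each statement's English description precedes it below -/
import Mathlib

section
/- (Analytic core of Gromov's reparametrization lemma.) For every integer r≥2 there exists a constant C_r>0, depending only on r, with the following property: for every C^r function f:(0,1)→(0,1) such that |f^{(j)}(x)|≤j! for all 0≤j≤r−1 and all x∈(0,1), and such that f^{(r)} is nonnegative and monotone (either nonincreasing or nondecreasing) on (0,1), the composition g(x) := f(3x²−2x³) satisfies |g^{(j)}(x)| ≤ C_r for all 0≤j≤r and all x∈(0,1). -/
open Set

/-!
Write `φ x = 3x² - 2x³`. Repeated use of the chain and product rules gives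
`(f ∘ φ)⁽ʲ⁾ = ∑_{i ≤ j} (f⁽ⁱ⁾ ∘ φ) · P j i` with polynomial coefficients and `P j j = (φ')ʲ`.
Every term with `i < r` is bounded by the hypotheses on `f`. For the top term, the mean value
theorem for `f⁽ʳ⁻¹⁾` on `[t/2, t]` (if `f⁽ʳ⁾` decreases) or on `[t, (1+t)/2]` (if it increases)
gives `f⁽ʳ⁾(t) · min(t, 1 - t) ≤ 4 (r-1)!`, while `φ'(x)ʳ = (6x(1-x))ʳ ≤ 6ʳ min(φ x, 1 - φ x)`
because `r ≥ 2`, `φ x ≥ x²` and `1 - φ x ≥ (1-x)²`: the reparametrization flattens `φ` at both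
endpoints fast enough to absorb the blow-up of `f⁽ʳ⁾`.
-/

open Polynomial Finset Filter Topology Nat

theorem ContDiffAt.hasDerivAt_iteratedDeriv {𝕜 F : Type*} [NontriviallyNormedField 𝕜]
    [NormedAddCommGroup F] [NormedSpace 𝕜 F] {f : 𝕜 → F} {x : 𝕜} {n : WithTop ℕ∞} {i : ℕ}
    (h : ContDiffAt 𝕜 n f x) (hi : (i : WithTop ℕ∞) < n) :
    HasDerivAt (iteratedDeriv i f) (iteratedDeriv (i + 1) f x) x := by
  have hd : DifferentiableAt 𝕜 (iteratedDeriv i f) x :=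
    (h.differentiableAt_iteratedFDeriv hi).continuousMultilinear_apply_const _
  simpa only [iteratedDeriv_succ] using hd.hasDerivAt

namespace Polynomial

section Semiring

variable {R : Type*} [CommSemiring R] (q : R[X])

/-- The recursion differentiates `(f⁽ⁱ⁾ ∘ q) · P k i` by the product and chain rules. -/
noncomputable def iteratedDerivCompCoeff : ℕ → ℕ → R[X]
  | 0, 0 => 1
  | 0, _ + 1 => 0
  | k + 1, 0 => derivative (iteratedDerivCompCoeff k 0)
  | k + 1, i + 1 =>
    derivative (iteratedDerivCompCoeff k (i + 1)) + derivative q * iteratedDerivCompCoeff k i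

theorem iteratedDerivCompCoeff_eq_zero {k i : ℕ} (h : k < i) :
    q.iteratedDerivCompCoeff k i = 0 := by
  induction k generalizing i with
  | zero => obtain ⟨i, rfl⟩ := Nat.exists_eq_add_one.2 h; rfl
  | succ k ih =>
    obtain ⟨i, rfl⟩ := Nat.exists_eq_add_one.2 (Nat.zero_lt_of_lt h)
    simp only [iteratedDerivCompCoeff, ih (by omega : k < i + 1), ih (by omega : k < i),
      derivative_zero, mul_zero, add_zero]

theorem iteratedDerivCompCoeff_self (k : ℕ) :
    q.iteratedDerivCompCoeff k k = derivative q ^ k := by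
  induction k with
  | zero => rfl
  | succ k ih =>
    rw [iteratedDerivCompCoeff, iteratedDerivCompCoeff_eq_zero q k.lt_succ_self, ih,
      derivative_zero, zero_add]
    exact (pow_succ' _ _).symm

theorem sum_eval_iteratedDerivCompCoeff_succ (a : ℕ → R) (x : R) (k : ℕ) :
    ∑ i ∈ range (k + 2), a i * (q.iteratedDerivCompCoeff (k + 1) i).eval x =
      ∑ i ∈ range (k + 1),
        (a (i + 1) * (derivative q).eval x * (q.iteratedDerivCompCoeff k i).eval x
          + a i * (derivative (q.iteratedDerivCompCoeff k i)).eval x) := by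
  rw [sum_range_succ', sum_add_distrib, sum_range_succ' (fun i => a i * _)]
  simp only [iteratedDerivCompCoeff, eval_add, eval_mul, mul_add, ← mul_assoc, sum_add_distrib]
  rw [sum_range_succ (fun i => a (i + 1) * _), iteratedDerivCompCoeff_eq_zero q k.lt_succ_self]
  simp only [derivative_zero, eval_zero, mul_zero, add_zero]
  ring

end Semiring

theorem iteratedDeriv_comp_eq_sum {𝕜 : Type*} [NontriviallyNormedField 𝕜] (q : 𝕜[X])
    {f : 𝕜 → 𝕜} {U : Set 𝕜} (hU : IsOpen U) {n : ℕ} (hf : ContDiffOn 𝕜 n f U) {k : ℕ}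
    (hk : k ≤ n) {x : 𝕜} (hx : q.eval x ∈ U) :
    iteratedDeriv k (fun t => f (q.eval t)) x =
      ∑ i ∈ range (k + 1),
        iteratedDeriv i f (q.eval x) * (q.iteratedDerivCompCoeff k i).eval x := by
  induction k generalizing x with
  | zero => simp [iteratedDerivCompCoeff]
  | succ k ih =>
    have hterm : ∀ i ∈ range (k + 1), HasDerivAt
        (fun y => iteratedDeriv i f (q.eval y) * (q.iteratedDerivCompCoeff k i).eval y)
        (iteratedDeriv (i + 1) f (q.eval x) * (derivative q).eval x
            * (q.iteratedDerivCompCoeff k i).eval x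
          + iteratedDeriv i f (q.eval x) * (derivative (q.iteratedDerivCompCoeff k i)).eval x)
        x := by
      intro i hi
      have hin : ((i : ℕ) : WithTop ℕ∞) < n := by
        have := mem_range.1 hi; exact_mod_cast (by omega : i < n)
      exact (((hf.contDiffAt (hU.mem_nhds hx)).hasDerivAt_iteratedDeriv hin).comp x
        (q.hasDerivAt x)).mul ((q.iteratedDerivCompCoeff k i).hasDerivAt x)
    have hev : iteratedDeriv k (fun t => f (q.eval t)) =ᶠ[𝓝 x] fun y => ∑ i ∈ range (k + 1),
        iteratedDeriv i f (q.eval y) * (q.iteratedDerivCompCoeff k i).eval y :=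
      eventually_of_mem ((hU.preimage q.continuous).mem_nhds hx) fun y hy => ih (by omega) hy
    rw [iteratedDeriv_succ, hev.deriv_eq, (HasDerivAt.fun_sum hterm).deriv,
      sum_eval_iteratedDerivCompCoeff_succ]

theorem exists_abs_eval_le {ι : Type*} {K : Set ℝ} (hK : IsCompact K) (s : Finset ι)
    (p : ι → ℝ[X]) : ∃ M, 0 ≤ M ∧ ∀ i ∈ s, ∀ x ∈ K, |(p i).eval x| ≤ M := by
  choose C hC using fun i => hK.exists_bound_of_continuousOn (p i).continuous.continuousOn
  obtain ⟨M, hM⟩ := (s.image C).exists_le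
  exact ⟨max M 0, le_max_right _ _, fun i hi x hx =>
    (hC i x hx).trans ((hM _ (mem_image_of_mem C hi)).trans (le_max_left _ _))⟩

end Polynomial

theorem AntitoneOn.deriv_mul_sub_le_of_abs_le {g g' : ℝ → ℝ} {a b B : ℝ} (hab : a < b)
    (hg : ∀ y ∈ Icc a b, HasDerivAt g (g' y) y) (hg' : AntitoneOn g' (Icc a b))
    (hB : ∀ y ∈ Icc a b, |g y| ≤ B) : g' b * (b - a) ≤ 2 * B := by
  obtain ⟨c, hc, hslope⟩ := exists_hasDerivAt_eq_slope g g' hab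
    (fun y hy => (hg y hy).continuousAt.continuousWithinAt)
    (fun y hy => hg y (Ioo_subset_Icc_self hy))
  have hBa := abs_le.1 (hB a (left_mem_Icc.2 hab.le))
  have hBb := abs_le.1 (hB b (right_mem_Icc.2 hab.le))
  calc g' b * (b - a) ≤ g' c * (b - a) :=
        mul_le_mul_of_nonneg_right (hg' (Ioo_subset_Icc_self hc) (right_mem_Icc.2 hab.le) hc.2.le)
          (sub_nonneg.2 hab.le)
    _ = g b - g a := by rw [hslope]; field_simp [sub_ne_zero.2 hab.ne']
    _ ≤ 2 * B := by linarith

theorem MonotoneOn.deriv_mul_sub_le_of_abs_le {g g' : ℝ → ℝ} {a b B : ℝ} (hab : a < b)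
    (hg : ∀ y ∈ Icc a b, HasDerivAt g (g' y) y) (hg' : MonotoneOn g' (Icc a b))
    (hB : ∀ y ∈ Icc a b, |g y| ≤ B) : g' a * (b - a) ≤ 2 * B := by
  obtain ⟨c, hc, hslope⟩ := exists_hasDerivAt_eq_slope g g' hab
    (fun y hy => (hg y hy).continuousAt.continuousWithinAt)
    (fun y hy => hg y (Ioo_subset_Icc_self hy))
  have hBa := abs_le.1 (hB a (left_mem_Icc.2 hab.le))
  have hBb := abs_le.1 (hB b (right_mem_Icc.2 hab.le))
  calc g' a * (b - a) ≤ g' c * (b - a) :=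
        mul_le_mul_of_nonneg_right (hg' (left_mem_Icc.2 hab.le) (Ioo_subset_Icc_self hc) hc.1.le)
          (sub_nonneg.2 hab.le)
    _ = g b - g a := by rw [hslope]; field_simp [sub_ne_zero.2 hab.ne']
    _ ≤ 2 * B := by linarith

theorem deriv_mul_min_le_of_abs_le {g g' : ℝ → ℝ} {B : ℝ}
    (hg : ∀ y ∈ Ioo (0 : ℝ) 1, HasDerivAt g (g' y) y) (hB : ∀ y ∈ Ioo (0 : ℝ) 1, |g y| ≤ B)
    (hg'0 : ∀ y ∈ Ioo (0 : ℝ) 1, 0 ≤ g' y)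
    (hg' : AntitoneOn g' (Ioo 0 1) ∨ MonotoneOn g' (Ioo 0 1)) {t : ℝ} (ht : t ∈ Ioo (0 : ℝ) 1) :
    g' t * min t (1 - t) ≤ 4 * B := by
  obtain ⟨ht0, ht1⟩ := ht
  rcases hg' with hanti | hmono
  · have hsub : Icc (t / 2) t ⊆ Ioo 0 1 := fun y hy => ⟨by linarith [hy.1], by linarith [hy.2]⟩
    have := hanti.mono hsub |>.deriv_mul_sub_le_of_abs_le (by linarith)
      (fun y hy => hg y (hsub hy)) (fun y hy => hB y (hsub hy))
    calc g' t * min t (1 - t) ≤ g' t * t :=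
          mul_le_mul_of_nonneg_left (min_le_left _ _) (hg'0 t ⟨ht0, ht1⟩)
      _ ≤ 4 * B := by linarith
  · have hsub : Icc t ((t + 1) / 2) ⊆ Ioo 0 1 :=
      fun y hy => ⟨by linarith [hy.1], by linarith [hy.2]⟩
    have := hmono.mono hsub |>.deriv_mul_sub_le_of_abs_le (by linarith)
      (fun y hy => hg y (hsub hy)) (fun y hy => hB y (hsub hy))
    calc g' t * min t (1 - t) ≤ g' t * (1 - t) :=
          mul_le_mul_of_nonneg_left (min_le_right _ _) (hg'0 t ⟨ht0, ht1⟩)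
      _ ≤ 4 * B := by linarith

noncomputable def smoothstep : ℝ[X] := C 3 * X ^ 2 - C 2 * X ^ 3

theorem eval_smoothstep (x : ℝ) : smoothstep.eval x = 3 * x ^ 2 - 2 * x ^ 3 := by
  simp [smoothstep]

theorem eval_derivative_smoothstep (x : ℝ) :
    (derivative smoothstep).eval x = 6 * x * (1 - x) := by
  simp [smoothstep]; ring

theorem smoothstep_mem_Ioo {x : ℝ} (hx : x ∈ Ioo (0 : ℝ) 1) :
    smoothstep.eval x ∈ Ioo (0 : ℝ) 1 := by
  obtain ⟨h0, h1⟩ := hx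
  rw [eval_smoothstep]
  constructor <;> nlinarith [mul_pos h0 h0, mul_pos (sub_pos.2 h1) (sub_pos.2 h1)]

theorem eval_derivative_smoothstep_pow_le {r : ℕ} (hr : 2 ≤ r) {x : ℝ}
    (hx : x ∈ Ioo (0 : ℝ) 1) :
    (derivative smoothstep).eval x ^ r ≤
      6 ^ r * min (smoothstep.eval x) (1 - smoothstep.eval x) := by
  obtain ⟨h0, h1⟩ := hx
  have hx0 := mul_pos h0 h0
  have hx1 := mul_pos (sub_pos.2 h1) (sub_pos.2 h1)
  set d := (derivative smoothstep).eval x with hd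
  have hd0 : 0 ≤ d := by rw [hd, eval_derivative_smoothstep]; nlinarith
  have hd6 : d ≤ 6 := by rw [hd, eval_derivative_smoothstep]; nlinarith
  have hsq : d ^ 2 ≤ 6 ^ 2 * min (smoothstep.eval x) (1 - smoothstep.eval x) := by
    rw [mul_min_of_nonneg _ _ (by positivity), hd, eval_derivative_smoothstep, eval_smoothstep]
    refine le_min ?_ ?_ <;> nlinarith [mul_pos h0 (sub_pos.2 h1)]
  calc d ^ r = d ^ (r - 2) * d ^ 2 := by rw [← pow_add, Nat.sub_add_cancel hr]
    _ ≤ 6 ^ (r - 2) * (6 ^ 2 * min (smoothstep.eval x) (1 - smoothstep.eval x)) :=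
        mul_le_mul (pow_le_pow_left₀ hd0 hd6 _) hsq (sq_nonneg _) (by positivity)
    _ = _ := by rw [← mul_assoc, ← pow_add, Nat.sub_add_cancel hr]

theorem iteratedDeriv_mul_derivative_smoothstep_pow_le {r : ℕ} (hr : 2 ≤ r) {f : ℝ → ℝ} {B : ℝ}
    (hf : ContDiffOn ℝ r f (Ioo 0 1)) (hB : ∀ y ∈ Ioo (0 : ℝ) 1, |iteratedDeriv (r - 1) f y| ≤ B)
    (hpos : ∀ y ∈ Ioo (0 : ℝ) 1, 0 ≤ iteratedDeriv r f y)
    (hmono : AntitoneOn (iteratedDeriv r f) (Ioo 0 1) ∨ MonotoneOn (iteratedDeriv r f) (Ioo 0 1))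
    {x : ℝ} (hx : x ∈ Ioo (0 : ℝ) 1) :
    iteratedDeriv r f (smoothstep.eval x) * (derivative smoothstep).eval x ^ r ≤ 4 * B * 6 ^ r := by
  have hg : ∀ y ∈ Ioo (0 : ℝ) 1, HasDerivAt (iteratedDeriv (r - 1) f) (iteratedDeriv r f y) y := by
    intro y hy
    have hlt : ((r - 1 : ℕ) : WithTop ℕ∞) < r := by exact_mod_cast (by omega : r - 1 < r)
    simpa only [Nat.sub_add_cancel (by omega : 1 ≤ r)] using
      (hf.contDiffAt (isOpen_Ioo.mem_nhds hy)).hasDerivAt_iteratedDeriv hlt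
  have hφ := smoothstep_mem_Ioo hx
  calc iteratedDeriv r f (smoothstep.eval x) * (derivative smoothstep).eval x ^ r
      ≤ iteratedDeriv r f (smoothstep.eval x) *
          (6 ^ r * min (smoothstep.eval x) (1 - smoothstep.eval x)) :=
        mul_le_mul_of_nonneg_left (eval_derivative_smoothstep_pow_le hr hx) (hpos _ hφ)
    _ = 6 ^ r * (iteratedDeriv r f (smoothstep.eval x) *
          min (smoothstep.eval x) (1 - smoothstep.eval x)) := by ring
    _ ≤ 6 ^ r * (4 * B) :=
        mul_le_mul_of_nonneg_left (deriv_mul_min_le_of_abs_le hg hB hpos hmono hφ) (by positivity)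
    _ = 4 * B * 6 ^ r := by ring

/-- Analytic core of Gromov's reparametrization lemma: for every `r ≥ 2` there is `C_r > 0`
such that for every `C^r` function `f : (0,1) → (0,1)` with `|f^{(j)}| ≤ j!` for all
`j ≤ r - 1`, whose `r`-th derivative is nonnegative and monotone on `(0,1)`, the composition
`g(x) = f(3x² - 2x³)` satisfies `|g^{(j)}(x)| ≤ C_r` for all `j ≤ r` and `x ∈ (0,1)`. -/
theorem gromov_reparametrization_core (r : ℕ) (hr : 2 ≤ r) :
    ∃ C : ℝ, 0 < C ∧
      ∀ f : ℝ → ℝ, ContDiffOn ℝ r f (Set.Ioo 0 1) →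
        (∀ x ∈ Set.Ioo (0 : ℝ) 1, f x ∈ Set.Ioo (0 : ℝ) 1) →
        (∀ j ≤ r - 1, ∀ x ∈ Set.Ioo (0 : ℝ) 1,
          |iteratedDeriv j f x| ≤ (Nat.factorial j : ℝ)) →
        (∀ x ∈ Set.Ioo (0 : ℝ) 1, 0 ≤ iteratedDeriv r f x) →
        ((∀ x ∈ Set.Ioo (0 : ℝ) 1, ∀ y ∈ Set.Ioo (0 : ℝ) 1, x ≤ y →
            iteratedDeriv r f y ≤ iteratedDeriv r f x) ∨
          (∀ x ∈ Set.Ioo (0 : ℝ) 1, ∀ y ∈ Set.Ioo (0 : ℝ) 1, x ≤ y →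
            iteratedDeriv r f x ≤ iteratedDeriv r f y)) →
        ∀ j ≤ r, ∀ x ∈ Set.Ioo (0 : ℝ) 1,
          |iteratedDeriv j (fun t => f (3 * t ^ 2 - 2 * t ^ 3)) x| ≤ C := by
  obtain ⟨M, hM0, hM⟩ := exists_abs_eval_le isCompact_Icc (range (r + 1) ×ˢ range (r + 1))
    fun ki => smoothstep.iteratedDerivCompCoeff ki.1 ki.2
  refine ⟨r * (r ! * M) + (r ! * M + 4 * (r - 1)! * 6 ^ r), by positivity, ?_⟩
  intro f hf _ hfj hpos hmono j hj x hx
  have hφ := smoothstep_mem_Ioo hx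
  have hlow : ∀ i ≤ j, i < r →
      |iteratedDeriv i f (smoothstep.eval x) * (smoothstep.iteratedDerivCompCoeff j i).eval x|
        ≤ r ! * M := fun i hij hir => by
    rw [abs_mul]
    exact mul_le_mul ((hfj i (by omega) _ hφ).trans (mod_cast factorial_le hir.le))
      (hM (j, i) (by simp; omega) x (Ioo_subset_Icc_self hx)) (abs_nonneg _) (by positivity)
  have hsum : |∑ i ∈ range j, iteratedDeriv i f (smoothstep.eval x) *
      (smoothstep.iteratedDerivCompCoeff j i).eval x| ≤ r * (r ! * M) := by
    refine (abs_sum_le_sum_abs _ _).trans ((sum_le_card_nsmul _ _ _ fun i hi =>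
      hlow i (mem_range.1 hi).le (by have := mem_range.1 hi; omega)).trans ?_)
    rw [card_range, nsmul_eq_mul]
    exact mul_le_mul_of_nonneg_right (mod_cast hj) (by positivity)
  have htop : |iteratedDeriv j f (smoothstep.eval x) *
      (smoothstep.iteratedDerivCompCoeff j j).eval x|
      ≤ r ! * M + 4 * (r - 1)! * 6 ^ r := by
    rcases hj.lt_or_eq with hjr | rfl
    · linarith [hlow j le_rfl hjr, show (0 : ℝ) ≤ 4 * (r - 1)! * 6 ^ r by positivity]
    · rw [iteratedDerivCompCoeff_self, eval_pow, abs_of_nonneg (mul_nonneg (hpos _ hφ)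
        (pow_nonneg (by rw [eval_derivative_smoothstep]; nlinarith [hx.1, hx.2]) _))]
      linarith [iteratedDeriv_mul_derivative_smoothstep_pow_le hr hf (hfj (j - 1) le_rfl) hpos
          hmono hx,
        show (0 : ℝ) ≤ j ! * M by positivity]
  have hcomp : (fun t => f (3 * t ^ 2 - 2 * t ^ 3)) = fun t => f (smoothstep.eval t) := by
    simp only [eval_smoothstep]
  rw [hcomp, iteratedDeriv_comp_eq_sum _ isOpen_Ioo hf hj hφ, sum_range_succ]
  exact (abs_add_le _ _).trans (add_le_add hsum htop)
end

section
/- Let ℓ≥2 and L>0, and let f: (0,1)^ℓ→ℝ be a function such that for every t∈(0,1) the function y↦f(t,y) is L-Lipschitz on (0,1)^{ℓ−1}. Then for every t∈(0,1), the set {y∈(0,1)^{ℓ−1} : f is discontinuous at (t,y)} is open in (0,1)^{ℓ−1}. More precisely, if x∈(0,1)^ℓ satisfies limsup_{z→x}|f(z)−f(x)| = ε > 0, then every point x′∈(0,1)^ℓ with the same first coordinate as x and with |x−x′| < ε/(4L) satisfies limsup_{z→x′}|f(z)−f(x′)| ≥ ε/2. -/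
/-!
Translation by `x' - x` along a fiber maps points `z` near `x` to points `z + (x' - x)` near `x'`
lying in the fiber of `z`. Applying the fiberwise Lipschitz bound on the fibers of `z` and of `x`
changes `|f z - f x|` by at most `2 L |x - x'|`, so the oscillation of `f` at `x'` is at least
its oscillation at `x` minus `2 L |x - x'|`.
-/

open Set Filter Topology

/-- The open unit cube `(0,1)^ℓ`. -/
def unitCube (ℓ : ℕ) : Set (Fin ℓ → ℝ) := {x | ∀ i, x i ∈ Set.Ioo (0 : ℝ) 1}

theorem isOpen_unitCube (ℓ : ℕ) : IsOpen (unitCube ℓ) := by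
  simpa only [unitCube, Set.pi, mem_univ, true_imp_iff] using
    isOpen_set_pi finite_univ fun (_ : Fin ℓ) _ => isOpen_Ioo (a := (0 : ℝ)) (b := 1)

theorem Metric.frequently_nhdsWithin_iff {X : Type*} [PseudoMetricSpace X] {s : Set X} {x : X}
    {p : X → Prop} : (∃ᶠ z in 𝓝[s] x, p z) ↔ ∀ η > 0, ∃ z ∈ s, dist z x < η ∧ p z := by
  simp only [Metric.nhdsWithin_basis_ball.frequently_iff, mem_inter_iff, Metric.mem_ball]
  grind

theorem not_continuousWithinAt_iff_frequently_lt_dist {X Y : Type*} [TopologicalSpace X]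
    [PseudoMetricSpace Y] {f : X → Y} {s : Set X} {x : X} :
    ¬ContinuousWithinAt f s x ↔ ∃ ε > 0, ∃ᶠ z in 𝓝[s] x, ε < dist (f z) (f x) := by
  rw [ContinuousWithinAt, Metric.tendsto_nhds]
  push Not
  constructor
  · rintro ⟨ε, hε, h⟩
    exact ⟨ε / 2, half_pos hε, h.mono fun z hz => by linarith⟩
  · rintro ⟨ε, hε, h⟩
    exact ⟨ε, hε, h.mono fun z hz => hz.le⟩

section FiberLipschitz

variable {E F : Type*} [SeminormedAddCommGroup E] [AddCommGroup F] {U : Set E} {f : E → ℝ}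
  {L : ℝ} {p : E →+ F}

theorem abs_sub_le_abs_sub_add_translate
    (hlip : ∀ x ∈ U, ∀ y ∈ U, p x = p y → |f x - f y| ≤ L * dist x y) {x x' z : E}
    (hx : x ∈ U) (hx' : x' ∈ U) (hz : z ∈ U) (hz' : z + (x' - x) ∈ U) (hp : p x' = p x) :
    |f z - f x| ≤ |f (z + (x' - x)) - f x'| + 2 * L * dist x x' := by
  have hzz' : |f z - f (z + (x' - x))| ≤ L * dist x x' := by
    have := hlip z hz _ hz' (by simp [hp])
    rwa [dist_comm, dist_eq_norm, add_sub_cancel_left, ← dist_eq_norm, dist_comm] at this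
  have hxx' : |f x' - f x| ≤ L * dist x x' := dist_comm x x' ▸ hlip x' hx' x hx hp
  calc |f z - f x| = |(f z - f (z + (x' - x))) + (f (z + (x' - x)) - f x') + (f x' - f x)| := by
        ring_nf
    _ ≤ |f z - f (z + (x' - x))| + |f (z + (x' - x)) - f x'| + |f x' - f x| := abs_add_three _ _ _
    _ ≤ _ := by linarith

theorem frequently_lt_abs_sub_of_translate (hU : IsOpen U)
    (hlip : ∀ x ∈ U, ∀ y ∈ U, p x = p y → |f x - f y| ≤ L * dist x y) {x x' : E} {a : ℝ}
    (hx : x ∈ U) (hx' : x' ∈ U) (hp : p x' = p x)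
    (h : ∃ᶠ z in 𝓝[U] x, a < |f z - f x|) :
    ∃ᶠ z in 𝓝[U] x', a - 2 * L * dist x x' < |f z - f x'| := by
  have hT : Tendsto (· + (x' - x)) (𝓝[U] x) (𝓝 x') := by
    have := ((continuous_add_const (x' - x)).tendsto x).mono_left (nhdsWithin_le_nhds (s := U))
    simpa using this
  have hTU : ∀ᶠ z in 𝓝[U] x, z + (x' - x) ∈ U := hT.eventually (hU.mem_nhds hx')
  rw [frequently_nhdsWithin_iff]
  refine hT.frequently ?_
  refine ((h.and_eventually hTU).and_eventually self_mem_nhdsWithin).mono ?_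
  rintro z ⟨⟨ha, hz'⟩, hz⟩
  exact ⟨by linarith [abs_sub_le_abs_sub_add_translate hlip hx hx' hz hz' hp], hz'⟩

end FiberLipschitz

/-- If `f : (0,1)^ℓ → ℝ` is `L`-Lipschitz in the last `ℓ - 1` variables for every fixed
value of the first variable, then for every `t` the set of discontinuity points of `f` in
the fiber `{x₁ = t}` is open in the fiber; quantitatively, if the oscillation
`limsup_{z→x} |f(z) - f(x)|` equals `ε > 0` at `x`, then every `x'` in the same fiber with
`|x - x'| < ε/(4L)` has oscillation at least `ε/2`. -/
theorem lipschitz_fiber_discontinuity_open (ℓ : ℕ) (hℓ : 2 ≤ ℓ) (L : ℝ) (hL : 0 < L)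
    (f : (Fin ℓ → ℝ) → ℝ)
    (hlip : ∀ x ∈ unitCube ℓ, ∀ y ∈ unitCube ℓ,
      x (⟨0, by omega⟩ : Fin ℓ) = y (⟨0, by omega⟩ : Fin ℓ) →
      |f x - f y| ≤ L * dist x y) :
    (∀ x ∈ unitCube ℓ, ¬ContinuousWithinAt f (unitCube ℓ) x →
      ∃ η > 0, ∀ x' ∈ unitCube ℓ, x' (⟨0, by omega⟩ : Fin ℓ) = x (⟨0, by omega⟩ : Fin ℓ) →
        dist x' x < η → ¬ContinuousWithinAt f (unitCube ℓ) x') ∧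
    ∀ x ∈ unitCube ℓ, ∀ ε : ℝ, 0 < ε →
      (∀ δ > 0, ∀ η > 0, ∃ z ∈ unitCube ℓ, dist z x < η ∧ ε - δ < |f z - f x|) →
      (∀ δ > 0, ∃ η > 0, ∀ z ∈ unitCube ℓ, dist z x < η → |f z - f x| < ε + δ) →
      ∀ x' ∈ unitCube ℓ, x' (⟨0, by omega⟩ : Fin ℓ) = x (⟨0, by omega⟩ : Fin ℓ) →
        dist x x' < ε / (4 * L) →
        ∀ δ > 0, ∀ η > 0, ∃ z ∈ unitCube ℓ, dist z x' < η ∧ ε / 2 - δ < |f z - f x'| := by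
  have hU := isOpen_unitCube ℓ
  have htranslate {x x' : Fin ℓ → ℝ} {a : ℝ} :=
    frequently_lt_abs_sub_of_translate (x := x) (x' := x') (a := a) hU
      (p := Pi.evalAddMonoidHom (fun _ => ℝ) ⟨0, by omega⟩) hlip
  refine ⟨fun x hx hdisc => ?_, fun x hx ε hε hlow _ x' hx' hp hd δ hδ => ?_⟩
  · obtain ⟨ε, hε, hfreq⟩ := not_continuousWithinAt_iff_frequently_lt_dist.1 hdisc
    refine ⟨ε / (2 * L), by positivity, fun x' hx' hp hd => ?_⟩
    have hgap : 0 < ε - 2 * L * dist x x' := by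
      rw [dist_comm, lt_div_iff₀ (by positivity)] at hd
      linarith
    have hfreq' := htranslate hx hx' hp
      (by simpa only [Real.dist_eq] using hfreq)
    exact not_continuousWithinAt_iff_frequently_lt_dist.2
      ⟨_, hgap, by simpa only [Real.dist_eq] using hfreq'⟩
  · have hgap : 2 * L * dist x x' < ε / 2 := by
      rw [lt_div_iff₀ (by positivity)] at hd
      linarith
    have hfreq := htranslate hx hx' hp
      (Metric.frequently_nhdsWithin_iff.2 (hlow δ hδ))
    exact Metric.frequently_nhdsWithin_iff.1 (hfreq.mono fun z hz => by linarith)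
end
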